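/- Let A = {0,1}, ε ∈ (0,1), and define g(x̄, 1) = ε if the past x̄ codes a rational number (i.e. Σ_{i≥1} x_{-i} 2^{-i} ∈ ℚ ∩ [0,1)) and g(x̄, 1) = 1 − ε otherwise. Let μ be the Bernoulli product measure with μ(x_i = 1) = 1 − ε. Then the entropy identity ∫ log g(x̄ x_0) dμ(x) = ε log ε + (1−ε) log(1−ε) holds (equal to the entropy h(μ)), so μ is compatible with g. -/

import Mathlib

open MeasureTheory Filter
open scoped Classical

/-- The past of a bi-infinite binary sequence: `_root_.negPart y i = y_{-(i+1)}`. -/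
def negPart (y : ℤ → Bool) : ℕ → Bool := fun i => y (-(i + 1) : ℤ)

/-- The σ-algebra `F^-` of the coordinates in `(-∞, -1]`. -/
def Fminus : MeasurableSpace (ℤ → Bool) := MeasurableSpace.comap _root_.negPart inferInstance

/-- The real number `Σ_{i≥1} x_{-i} 2^{-i} ∈ [0,1)` coded by a past. -/
noncomputable def codes (p : ℕ → Bool) : ℝ :=
  ∑' i : ℕ, if p i then ((2 : ℝ) ^ (i + 1))⁻¹ else 0

/-- The past codes a rational number. -/
def codesRat (p : ℕ → Bool) : Prop := ∃ q : ℚ, codes p = (q : ℝ)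

/-- The everywhere non-essentially discontinuous `g`-function:
`g(x̄, 1) = ε` if `x̄` codes a rational and `1 − ε` otherwise. -/
noncomputable def grat (ε : ℝ) (p : ℕ → Bool) (a : Bool) : ℝ :=
  if a then (if codesRat p then ε else 1 - ε) else (if codesRat p then 1 - ε else ε)

namespace BernoulliRatAux

/-! ### Binary prefix arithmetic -/

lemma kbound (n : ℕ) (v : ℕ → Bool) :
    (∑ i ∈ Finset.range n, if v i then 2 ^ i else 0 : ℕ) < 2 ^ n := by
  induction n with
  | zero => simp
  | succ n ih =>
    rw [Finset.sum_range_succ]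
    have h1 : (if v n then 2 ^ n else 0 : ℕ) ≤ 2 ^ n := by split <;> omega
    have h2 : (2 : ℕ) ^ (n + 1) = 2 ^ n + 2 ^ n := by ring
    omega

lemma kinj : ∀ (n : ℕ) (v w : ℕ → Bool),
    (∑ i ∈ Finset.range n, if v i then 2 ^ i else 0 : ℕ)
      = (∑ i ∈ Finset.range n, if w i then 2 ^ i else 0) →
    ∀ i < n, v i = w i := by
  intro n
  induction n with
  | zero => intro v w _ i hi; omega
  | succ n ih =>
    intro v w h i hi
    rw [Finset.sum_range_succ, Finset.sum_range_succ] at h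
    have hv := kbound n v
    have hw := kbound n w
    have hvw : v n = w n := by
      cases hvn : v n <;> cases hwn : w n <;> simp [hvn, hwn] at h ⊢ <;> omega
    have hsum : (∑ i ∈ Finset.range n, if v i then 2 ^ i else 0 : ℕ)
        = ∑ i ∈ Finset.range n, if w i then 2 ^ i else 0 := by
      rw [hvw] at h
      cases hwn : w n <;> rw [hwn] at h <;> simp at h <;> omega
    rcases Nat.lt_succ_iff_lt_or_eq.mp hi with h' | rfl
    · exact ih v w hsum i h'
    · exact hvw

/-- The natural number coded by the length-`n` prefix, with reversed binary weights. -/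
def kfun (n : ℕ) (p : ℕ → Bool) : ℕ :=
  ∑ i ∈ Finset.range n, if p i then 2 ^ (n - 1 - i) else 0

lemma kfun_reflect (n : ℕ) (p : ℕ → Bool) :
    kfun n p = ∑ j ∈ Finset.range n, if p (n - 1 - j) then 2 ^ j else 0 := by
  rw [kfun, ← Finset.sum_range_reflect (fun j => if p (n - 1 - j) then 2 ^ j else 0 : ℕ → ℕ) n]
  refine Finset.sum_congr rfl fun i hi => ?_
  rw [Finset.mem_range] at hi
  have : n - 1 - (n - 1 - i) = i := by omega
  rw [this]

lemma kfun_inj {n : ℕ} {p q : ℕ → Bool} (h : kfun n p = kfun n q) :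
    ∀ i < n, p i = q i := by
  rw [kfun_reflect, kfun_reflect] at h
  have := kinj n (fun j => p (n - 1 - j)) (fun j => q (n - 1 - j)) h
  intro i hi
  have h2 := this (n - 1 - i) (by omega)
  have h3 : n - 1 - (n - 1 - i) = i := by omega
  simpa [h3] using h2

/-! ### Facts about `codes` -/

lemma term_nonneg (p : ℕ → Bool) (i : ℕ) :
    0 ≤ (if p i then ((2 : ℝ) ^ (i + 1))⁻¹ else 0) := by
  split <;> positivity

lemma term_le (p : ℕ → Bool) (i : ℕ) :
    (if p i then ((2 : ℝ) ^ (i + 1))⁻¹ else 0) ≤ ((2 : ℝ)⁻¹) ^ i := by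
  have h1 : ((2 : ℝ) ^ (i + 1))⁻¹ ≤ ((2 : ℝ)⁻¹) ^ i := by
    rw [← inv_pow]
    have : ((2 : ℝ)⁻¹) ^ (i + 1) ≤ ((2 : ℝ)⁻¹) ^ i :=
      pow_le_pow_of_le_one (by norm_num) (by norm_num) (by omega)
    exact this
  split
  · exact h1
  · positivity

lemma summable_geo : Summable (fun i : ℕ => ((2 : ℝ)⁻¹) ^ i) :=
  summable_geometric_of_lt_one (by norm_num) (by norm_num)

lemma summable_term (p : ℕ → Bool) :
    Summable (fun i => if p i then ((2 : ℝ) ^ (i + 1))⁻¹ else 0) :=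
  Summable.of_nonneg_of_le (term_nonneg p) (term_le p) summable_geo

lemma codes_nonneg (p : ℕ → Bool) : 0 ≤ codes p :=
  tsum_nonneg (term_nonneg p)

lemma codes_split (n : ℕ) (p : ℕ → Bool) :
    codes p = (∑ i ∈ Finset.range n, if p i then ((2 : ℝ) ^ (i + 1))⁻¹ else 0)
      + ∑' i : ℕ, (if p (i + n) then ((2 : ℝ) ^ (i + n + 1))⁻¹ else 0) := by
  rw [codes, ← Summable.sum_add_tsum_nat_add n (summable_term p)]

lemma tail_nonneg (n : ℕ) (p : ℕ → Bool) :
    0 ≤ ∑' i : ℕ, (if p (i + n) then ((2 : ℝ) ^ (i + n + 1))⁻¹ else 0) :=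
  tsum_nonneg fun i => by split <;> positivity

lemma tail_le (n : ℕ) (p : ℕ → Bool) :
    (∑' i : ℕ, (if p (i + n) then ((2 : ℝ) ^ (i + n + 1))⁻¹ else 0)) ≤ ((2 : ℝ)⁻¹) ^ n := by
  have hsum2 : Summable (fun i : ℕ => ((2 : ℝ)⁻¹) ^ (i + n + 1)) := by
    have := summable_geo.mul_right (((2 : ℝ)⁻¹) ^ (n + 1))
    refine this.congr fun i => ?_
    rw [← pow_add]
    ring_nf
  have h1 : (∑' i : ℕ, (if p (i + n) then ((2 : ℝ) ^ (i + n + 1))⁻¹ else 0))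
      ≤ ∑' i : ℕ, ((2 : ℝ)⁻¹) ^ (i + n + 1) := by
    refine Summable.tsum_le_tsum (fun i => ?_) ?_ hsum2
    · rw [← inv_pow]
      split
      · exact le_rfl
      · positivity
    · refine Summable.of_nonneg_of_le (fun i => by split <;> positivity)
        (fun i => ?_) summable_geo
      calc (if p (i + n) then ((2 : ℝ) ^ (i + n + 1))⁻¹ else 0)
          ≤ ((2 : ℝ)⁻¹) ^ (i + n) := term_le p (i + n)
        _ ≤ ((2 : ℝ)⁻¹) ^ i :=
            pow_le_pow_of_le_one (by norm_num) (by norm_num) (by omega)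
  have h2 : (∑' i : ℕ, ((2 : ℝ)⁻¹) ^ (i + n + 1)) = ((2 : ℝ)⁻¹) ^ n := by
    have hc : ∀ i : ℕ, ((2 : ℝ)⁻¹) ^ (i + n + 1) = ((2 : ℝ)⁻¹) ^ i * ((2 : ℝ)⁻¹) ^ (n + 1) := by
      intro i; rw [← pow_add]; ring_nf
    rw [tsum_congr hc, tsum_mul_right, tsum_geometric_of_lt_one (by norm_num) (by norm_num)]
    have h3 : ((1 : ℝ) - 2⁻¹)⁻¹ = 2 := by norm_num
    rw [h3, pow_succ]
    ring
  linarith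

end BernoulliRatAux

namespace BernoulliRatAux

lemma c_eq_k (n : ℕ) (p : ℕ → Bool) :
    (∑ i ∈ Finset.range n, if p i then ((2 : ℝ) ^ (i + 1))⁻¹ else 0)
      = (kfun n p : ℝ) / 2 ^ n := by
  rw [kfun]
  push_cast
  rw [Finset.sum_div]
  refine Finset.sum_congr rfl fun i hi => ?_
  rw [Finset.mem_range] at hi
  have hexp : (n - 1 - i) + (i + 1) = n := by omega
  split
  · rw [eq_div_iff (by positivity : ((2 : ℝ) ^ n) ≠ 0)]
    rw [show (2:ℝ)^n = 2^(n-1-i) * 2^(i+1) by rw [← pow_add, hexp]]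
    rw [mul_comm, mul_inv_cancel_right₀ (by positivity)]
  · simp

/-- If `codes p = r` then the prefix number `kfun n p` lies in `{⌊2^n r⌋ - 1, ⌊2^n r⌋}`. -/
lemma kfun_mem (n : ℕ) (p : ℕ → Bool) (r : ℝ) (h : codes p = r) :
    (kfun n p : ℤ) = ⌊(2 : ℝ) ^ n * r⌋ - 1 ∨ (kfun n p : ℤ) = ⌊(2 : ℝ) ^ n * r⌋ := by
  have hsplit := codes_split n p
  rw [h, c_eq_k] at hsplit
  have ht0 := tail_nonneg n p
  have ht1 := tail_le n p
  have h2n : (0 : ℝ) < 2 ^ n := by positivity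
  have hinv : ((2 : ℝ)⁻¹) ^ n * 2 ^ n = 1 := by
    rw [← mul_pow]; norm_num
  -- r = k/2^n + t with 0 ≤ t ≤ 2⁻¹^n
  have hlow : (kfun n p : ℝ) ≤ 2 ^ n * r := by
    have : (kfun n p : ℝ) / 2 ^ n ≤ r := by linarith
    calc (kfun n p : ℝ) = ((kfun n p : ℝ) / 2 ^ n) * 2 ^ n := by field_simp
      _ ≤ r * 2 ^ n := by nlinarith
      _ = 2 ^ n * r := by ring
  have hhigh : 2 ^ n * r ≤ (kfun n p : ℝ) + 1 := by
    have h1 : r ≤ (kfun n p : ℝ) / 2 ^ n + ((2 : ℝ)⁻¹) ^ n := by linarith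
    have h2 : 2 ^ n * r ≤ 2 ^ n * ((kfun n p : ℝ) / 2 ^ n + ((2 : ℝ)⁻¹) ^ n) := by nlinarith
    have h3 : 2 ^ n * ((kfun n p : ℝ) / 2 ^ n + ((2 : ℝ)⁻¹) ^ n) = (kfun n p : ℝ) + 1 := by
      rw [mul_add, mul_div_cancel₀ _ (ne_of_gt h2n), mul_comm ((2:ℝ)^n) _, hinv]
    linarith
  set m := ⌊(2 : ℝ) ^ n * r⌋ with hm
  have hub : (kfun n p : ℤ) ≤ m := by
    rw [hm]
    exact Int.le_floor.mpr (by exact_mod_cast hlow)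
  have hlb : m ≤ (kfun n p : ℤ) + 1 := by
    rw [hm]
    calc ⌊(2 : ℝ) ^ n * r⌋ ≤ ⌊((kfun n p : ℝ) + 1)⌋ := Int.floor_le_floor hhigh
      _ = (kfun n p : ℤ) + 1 := by
          rw [show ((kfun n p : ℝ) + 1) = (((kfun n p : ℤ) + 1 : ℤ) : ℝ) by push_cast; ring]
          exact Int.floor_intCast _
  omega

end BernoulliRatAux

namespace BernoulliRatAux

def fneg (i : ℕ) : ℤ := (-(i + 1) : ℤ)

lemma negPart_eq (y : ℤ → Bool) (i : ℕ) : _root_.negPart y i = y (fneg i) := rfl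

lemma fneg_inj : Function.Injective fneg := by
  intro a b h
  simp only [fneg, neg_inj] at h
  have : (a : ℤ) = b := by omega
  exact_mod_cast this

lemma fneg_ne_zero (i : ℕ) : fneg i ≠ 0 := by
  simp only [fneg]
  omega

lemma toNat_fneg (i : ℕ) : (-(fneg i) - 1).toNat = i := by
  simp only [fneg]
  omega

section Meas

variable (ε : ℝ) (μ : Measure (ℤ → Bool))

/-- probability of symbol `a` -/
noncomputable def pr (ε : ℝ) (a : Bool) : ℝ := if a then 1 - ε else ε

variable (hμ : ∀ (s : Finset ℤ) (w : ℤ → Bool),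
      μ {x | ∀ i ∈ s, x i = w i}
        = ∏ i ∈ s, ENNReal.ofReal (if w i then 1 - ε else ε))

include hμ

lemma cyl_meas (S : Finset ℕ) (w : ℕ → Bool) :
    μ {y | ∀ i ∈ S, _root_.negPart y i = w i}
      = ∏ i ∈ S, ENNReal.ofReal (pr ε (w i)) := by
  set w' : ℤ → Bool := fun j => w ((-j - 1).toNat) with hw'
  have hww : ∀ i : ℕ, w' (fneg i) = w i := fun i => by
    rw [hw']; simp only; rw [toNat_fneg]
  have hset : {y : ℤ → Bool | ∀ j ∈ S.image fneg, y j = w' j}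
      = {y | ∀ i ∈ S, _root_.negPart y i = w i} := by
    ext y
    simp only [Set.mem_setOf_eq, Finset.mem_image]
    constructor
    · intro h i hi
      have := h (fneg i) ⟨i, hi, rfl⟩
      rwa [hww] at this
    · rintro h j ⟨i, hi, rfl⟩
      rw [hww]
      exact h i hi
  rw [← hset, hμ (S.image fneg) w',
    Finset.prod_image (fun a _ b _ h => fneg_inj h)]
  exact Finset.prod_congr rfl fun i _ => by rw [hww]; rfl

lemma cyl_meas_zero (a : Bool) (S : Finset ℕ) (w : ℕ → Bool) :
    μ ({y | y 0 = a} ∩ {y | ∀ i ∈ S, _root_.negPart y i = w i})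
      = ENNReal.ofReal (pr ε a) * ∏ i ∈ S, ENNReal.ofReal (pr ε (w i)) := by
  set w' : ℤ → Bool := fun j => if j = 0 then a else w ((-j - 1).toNat) with hw'
  have hw0 : w' 0 = a := by simp [hw']
  have hww : ∀ i : ℕ, w' (fneg i) = w i := fun i => by
    rw [hw']; simp only; rw [if_neg (fneg_ne_zero i), toNat_fneg]
  have h0 : (0 : ℤ) ∉ S.image fneg := by
    simp only [Finset.mem_image]
    rintro ⟨i, _, h⟩
    exact fneg_ne_zero i h
  have hset : {y : ℤ → Bool | ∀ j ∈ insert (0 : ℤ) (S.image fneg), y j = w' j}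
      = {y | y 0 = a} ∩ {y | ∀ i ∈ S, _root_.negPart y i = w i} := by
    ext y
    simp only [Set.mem_setOf_eq, Set.mem_inter_iff, Finset.mem_insert]
    constructor
    · intro h
      refine ⟨by rw [h 0 (Or.inl rfl), hw0], fun i hi => ?_⟩
      have := h (fneg i) (Or.inr (Finset.mem_image.mpr ⟨i, hi, rfl⟩))
      rwa [hww] at this
    · rintro ⟨h1, h2⟩ j (rfl | hj)
      · rw [h1, hw0]
      · obtain ⟨i, hi, rfl⟩ := Finset.mem_image.mp hj
        rw [hww]
        exact h2 i hi
  rw [← hset, hμ (insert 0 (S.image fneg)) w', Finset.prod_insert h0,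
    Finset.prod_image (fun a _ b _ h => fneg_inj h)]
  rw [hw0]
  exact congrArg₂ (· * ·) rfl (Finset.prod_congr rfl fun i _ => by rw [hww]; rfl)

lemma point_meas (a : Bool) : μ {y | y 0 = a} = ENNReal.ofReal (pr ε a) := by
  have := cyl_meas_zero ε μ hμ a ∅ (fun _ => false)
  simpa using this

end Meas

end BernoulliRatAux

namespace BernoulliRatAux

section Null

variable (ε : ℝ) (μ : Measure (ℤ → Bool))
variable (hμ : ∀ (s : Finset ℤ) (w : ℤ → Bool),
      μ {x | ∀ i ∈ s, x i = w i}
        = ∏ i ∈ s, ENNReal.ofReal (if w i then 1 - ε else ε))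

include hμ

lemma fiber_null (hε0 : 0 < ε) (hε1 : ε < 1) (r : ℝ) :
    μ {y | codes (_root_.negPart y) = r} = 0 := by
  set θr : ℝ := max ε (1 - ε) with hθr
  have hθr1 : θr < 1 := max_lt hε1 (by linarith)
  set θ : ENNReal := ENNReal.ofReal θr with hθdef
  have hθ : θ < 1 := by
    rw [hθdef]
    exact ENNReal.ofReal_lt_one.mpr hθr1
  have hG : ∀ (n : ℕ) (j : ℤ), μ {y | (kfun n (_root_.negPart y) : ℤ) = j} ≤ θ ^ n := by
    intro n j
    by_cases hne : ({y : ℤ → Bool | (kfun n (_root_.negPart y) : ℤ) = j}).Nonempty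
    · obtain ⟨y₀, hy₀⟩ := hne
      have hsub2 : {y : ℤ → Bool | (kfun n (_root_.negPart y) : ℤ) = j}
          ⊆ {y | ∀ i ∈ Finset.range n, _root_.negPart y i = _root_.negPart y₀ i} := by
        intro y hy i hi
        rw [Finset.mem_range] at hi
        have hk : kfun n (_root_.negPart y) = kfun n (_root_.negPart y₀) := by
          have := hy.trans hy₀.symm
          exact_mod_cast this
        exact kfun_inj hk i hi
      calc μ {y : ℤ → Bool | (kfun n (_root_.negPart y) : ℤ) = j}
          ≤ μ {y | ∀ i ∈ Finset.range n, _root_.negPart y i = _root_.negPart y₀ i} := measure_mono hsub2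
        _ = ∏ i ∈ Finset.range n, ENNReal.ofReal (pr ε (_root_.negPart y₀ i)) :=
            cyl_meas ε μ hμ _ _
        _ ≤ ∏ _i ∈ Finset.range n, θ := by
            refine Finset.prod_le_prod' fun i _ => ?_
            refine ENNReal.ofReal_le_ofReal ?_
            rw [pr, hθr]
            split
            · exact le_max_right _ _
            · exact le_max_left _ _
        _ = θ ^ n := by rw [Finset.prod_const, Finset.card_range]
    · rw [Set.not_nonempty_iff_eq_empty] at hne
      rw [hne]
      simp
  have key : ∀ n : ℕ, μ {y | codes (_root_.negPart y) = r} ≤ 2 * θ ^ n := by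
    intro n
    set m := ⌊(2 : ℝ) ^ n * r⌋ with hm
    have hsub : {y : ℤ → Bool | codes (_root_.negPart y) = r}
        ⊆ {y | (kfun n (_root_.negPart y) : ℤ) = m - 1} ∪ {y | (kfun n (_root_.negPart y) : ℤ) = m} := by
      intro y hy
      rcases kfun_mem n (_root_.negPart y) r hy with h | h
      · exact Or.inl h
      · exact Or.inr h
    calc μ {y : ℤ → Bool | codes (_root_.negPart y) = r}
        ≤ μ ({y : ℤ → Bool | (kfun n (_root_.negPart y) : ℤ) = m - 1}
            ∪ {y | (kfun n (_root_.negPart y) : ℤ) = m}) := measure_mono hsub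
      _ ≤ μ {y : ℤ → Bool | (kfun n (_root_.negPart y) : ℤ) = m - 1}
            + μ {y | (kfun n (_root_.negPart y) : ℤ) = m} := measure_union_le _ _
      _ ≤ θ ^ n + θ ^ n := add_le_add (hG n (m - 1)) (hG n m)
      _ = 2 * θ ^ n := (two_mul _).symm
  have htend : Tendsto (fun n : ℕ => 2 * θ ^ n) atTop (nhds 0) := by
    have h0 : Tendsto (fun n : ℕ => θ ^ n) atTop (nhds 0) :=
      ENNReal.tendsto_pow_atTop_nhds_zero_of_lt_one hθ
    have := ENNReal.Tendsto.const_mul (a := 2) h0 (Or.inr (by norm_num))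
    simpa using this
  have hle : μ {y | codes (_root_.negPart y) = r} ≤ 0 :=
    le_of_tendsto_of_tendsto' tendsto_const_nhds htend key
  exact le_antisymm hle zero_le

lemma rat_null (hε0 : 0 < ε) (hε1 : ε < 1) :
    μ {y | codesRat (_root_.negPart y)} = 0 := by
  have hsub : {y : ℤ → Bool | codesRat (_root_.negPart y)}
      ⊆ ⋃ q : ℚ, {y : ℤ → Bool | codes (_root_.negPart y) = (q : ℝ)} := by
    rintro y ⟨q, hq⟩
    exact Set.mem_iUnion.mpr ⟨q, hq⟩
  refine measure_mono_null hsub (measure_iUnion_null fun q => ?_)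
  exact fiber_null ε μ hμ hε0 hε1 (q : ℝ)

lemma ae_not_rat (hε0 : 0 < ε) (hε1 : ε < 1) :
    ∀ᵐ y ∂μ, ¬ codesRat (_root_.negPart y) := by
  rw [MeasureTheory.ae_iff]
  have : {y : ℤ → Bool | ¬¬ codesRat (_root_.negPart y)} = {y | codesRat (_root_.negPart y)} := by
    ext y; simp
  rw [this]
  exact rat_null ε μ hμ hε0 hε1

end Null

end BernoulliRatAux

namespace BernoulliRatAux

section Ext

variable (ε : ℝ) (μ : Measure (ℤ → Bool))

lemma measurable_negPart : Measurable _root_.negPart :=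
  measurable_pi_lambda _ (fun i => measurable_pi_apply _)

lemma measurableSet_coord (a : Bool) : MeasurableSet {y : ℤ → Bool | y 0 = a} := by
  have h : {y : ℤ → Bool | y 0 = a} = (fun y : ℤ → Bool => y 0) ⁻¹' {a} := by
    ext y; simp
  rw [h]
  exact measurable_pi_apply 0 (measurableSet_singleton a)

lemma basic_E_eq (S : Finset ℕ) (w : ∀ i : S, Bool) :
    (_root_.negPart ⁻¹' MeasureTheory.cylinder S {w})
      = {y | ∀ i ∈ S, _root_.negPart y i = (if h : i ∈ S then w ⟨i, h⟩ else false)} := by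
  ext y
  simp only [Set.mem_preimage, MeasureTheory.mem_cylinder, Set.mem_singleton_iff,
    Set.mem_setOf_eq]
  rw [funext_iff]
  constructor
  · intro h i hi
    rw [dif_pos hi]
    exact h ⟨i, hi⟩
  · intro h i
    have := h i.1 i.2
    rwa [dif_pos i.2] at this

lemma cyl_decomp (S : Finset ℕ) (T : Set (∀ i : S, Bool)) (ν : Measure (ℤ → Bool)) :
    ν (_root_.negPart ⁻¹' MeasureTheory.cylinder S T)
      = ∑ w ∈ Finset.univ.filter (· ∈ T), ν (_root_.negPart ⁻¹' MeasureTheory.cylinder S {w}) := by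
  have hdecomp : _root_.negPart ⁻¹' MeasureTheory.cylinder S T
      = ⋃ w ∈ Finset.univ.filter (· ∈ T), _root_.negPart ⁻¹' MeasureTheory.cylinder S {w} := by
    ext y
    simp only [Set.mem_preimage, MeasureTheory.mem_cylinder, Set.mem_iUnion,
      Finset.mem_filter, Finset.mem_univ, true_and, Set.mem_singleton_iff]
    constructor
    · intro h
      exact ⟨_, h, rfl⟩
    · rintro ⟨w, hw, h⟩
      rw [h]
      exact hw
  rw [hdecomp, measure_biUnion_finset ?_ ?_]
  · intro w hw w' hw' hne
    refine Set.disjoint_left.mpr fun y hy hy' => ?_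
    simp only [Set.mem_preimage, MeasureTheory.mem_cylinder, Set.mem_singleton_iff] at hy hy'
    exact hne (hy ▸ hy')
  · intro w _
    exact measurable_negPart ((measurableSet_singleton w).cylinder)

variable (hμ : ∀ (s : Finset ℤ) (w : ℤ → Bool),
      μ {x | ∀ i ∈ s, x i = w i}
        = ∏ i ∈ s, ENNReal.ofReal (if w i then 1 - ε else ε))

include hμ

lemma map_restrict_eq [IsProbabilityMeasure μ] (a : Bool) :
    (μ.restrict {y | y 0 = a}).map _root_.negPart
      = ENNReal.ofReal (pr ε a) • μ.map _root_.negPart := by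
  haveI : IsFiniteMeasure ((μ.restrict {y | y 0 = a}).map _root_.negPart) :=
    Measure.isFiniteMeasure_map _ _
  refine ext_of_generate_finite (measurableCylinders (fun _ : ℕ => Bool))
    generateFrom_measurableCylinders.symm isPiSystem_measurableCylinders ?_ ?_
  · intro t ht
    obtain ⟨S, T, hT, rfl⟩ := (mem_measurableCylinders t).mp ht
    rw [Measure.map_apply (measurable_negPart) hT.cylinder, Measure.smul_apply,
      Measure.map_apply (measurable_negPart) hT.cylinder, smul_eq_mul,
      cyl_decomp S T (μ.restrict _), cyl_decomp S T μ, Finset.mul_sum]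
    refine Finset.sum_congr rfl fun w _ => ?_
    rw [Measure.restrict_apply (measurable_negPart ((measurableSet_singleton w).cylinder)),
      basic_E_eq, Set.inter_comm, cyl_meas_zero ε μ hμ a S _,
      cyl_meas ε μ hμ S _]
  · rw [Measure.map_apply (measurable_negPart) MeasurableSet.univ, Set.preimage_univ,
      Measure.restrict_apply MeasurableSet.univ, Set.univ_inter, point_meas ε μ hμ a,
      Measure.smul_apply, Measure.map_apply (measurable_negPart) MeasurableSet.univ,
      Set.preimage_univ, smul_eq_mul, measure_univ, mul_one]

lemma indep_set [IsProbabilityMeasure μ] (a : Bool) (t : Set (ℕ → Bool))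
    (ht : MeasurableSet t) :
    μ ({y | y 0 = a} ∩ _root_.negPart ⁻¹' t)
      = ENNReal.ofReal (pr ε a) * μ (_root_.negPart ⁻¹' t) := by
  have h := congrArg (fun ν : Measure (ℕ → Bool) => ν t) (map_restrict_eq ε μ hμ a)
  rw [Measure.map_apply (measurable_negPart) ht, Measure.smul_apply,
    Measure.map_apply (measurable_negPart) ht, smul_eq_mul,
    Measure.restrict_apply (measurable_negPart ht), Set.inter_comm] at h
  exact h

end Ext

end BernoulliRatAux

namespace BernoulliRatAux

section CondExp

variable (ε : ℝ) (μ : Measure (ℤ → Bool))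
variable (hμ : ∀ (s : Finset ℤ) (w : ℤ → Bool),
      μ {x | ∀ i ∈ s, x i = w i}
        = ∏ i ∈ s, ENNReal.ofReal (if w i then 1 - ε else ε))

include hμ

lemma hm_le : Fminus ≤ (inferInstance : MeasurableSpace (ℤ → Bool)) := by
  rw [Fminus]
  exact Measurable.comap_le measurable_negPart

lemma condexp_eq [IsProbabilityMeasure μ] (hε0 : 0 < ε) (hε1 : ε < 1) (a : Bool) :
    (fun _ : ℤ → Bool => pr ε a)
      =ᵐ[μ] μ[(fun y => if y 0 = a then (1 : ℝ) else 0) | Fminus] := by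
  have hm : Fminus ≤ (inferInstance : MeasurableSpace (ℤ → Bool)) := hm_le ε μ hμ
  haveI : SigmaFinite (μ.trim hm) := inferInstance
  have hpr0 : 0 ≤ pr ε a := by
    rw [pr]; split <;> linarith
  have hfind : (fun y : ℤ → Bool => if y 0 = a then (1 : ℝ) else 0)
      = Set.indicator {y : ℤ → Bool | y 0 = a} (fun _ => (1 : ℝ)) := by
    ext y
    by_cases h : y 0 = a <;> simp [Set.indicator, h]
  have hf : Integrable (fun y : ℤ → Bool => if y 0 = a then (1 : ℝ) else 0) μ := by
    rw [hfind]
    exact (integrable_const 1).indicator (measurableSet_coord a)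
  refine ae_eq_condExp_of_forall_setIntegral_eq hm hf
    (fun s _ hμs => (integrableOn_const hμs.ne))
    (fun s hs hμs => ?_)
    aestronglyMeasurable_const
  obtain ⟨t, ht, rfl⟩ := hs
  rw [hfind, setIntegral_indicator (measurableSet_coord a), setIntegral_const,
    setIntegral_const, measureReal_def, measureReal_def, Set.inter_comm, indep_set ε μ hμ a t ht]
  rw [smul_eq_mul, smul_eq_mul, mul_one, ENNReal.toReal_mul, ENNReal.toReal_ofReal hpr0]
  ring

end CondExp

end BernoulliRatAux

open BernoulliRatAux in
/-- For the Bernoulli product measure `μ` with `μ(x_i = 1) = 1 − ε`, the entropy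
identity `∫ log g(x̄ x_0) dμ = ε log ε + (1−ε) log(1−ε)` holds, and `μ` is
compatible with `g`. -/
theorem bernoulli_compatible_with_rational_g
    (ε : ℝ) (hε0 : 0 < ε) (hε1 : ε < 1)
    (μ : Measure (ℤ → Bool)) [IsProbabilityMeasure μ]
    (hμ : ∀ (s : Finset ℤ) (w : ℤ → Bool),
      μ {x | ∀ i ∈ s, x i = w i}
        = ∏ i ∈ s, ENNReal.ofReal (if w i then 1 - ε else ε)) :
    (∫ y, Real.log (grat ε (_root_.negPart y) (y 0)) ∂μ
        = ε * Real.log ε + (1 - ε) * Real.log (1 - ε)) ∧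
    ∀ a : Bool,
      (fun y => grat ε (_root_.negPart y) a)
        =ᵐ[μ] μ[(fun y => if y 0 = a then (1 : ℝ) else 0) | Fminus] := by
  constructor
  · have h2 : (fun y : ℤ → Bool => Real.log (grat ε (_root_.negPart y) (y 0)))
        =ᵐ[μ] fun y => Real.log (pr ε (y 0)) := by
      filter_upwards [ae_not_rat ε μ hμ hε0 hε1] with y hy
      cases hyy : y 0 <;> simp [grat, hy, pr, hyy]
    rw [integral_congr_ae h2]
    have hsplit : (fun y : ℤ → Bool => Real.log (pr ε (y 0)))
        = fun y => Set.indicator {y : ℤ → Bool | y 0 = true}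
            (fun _ => Real.log (1 - ε) - Real.log ε) y + Real.log ε := by
      ext y
      cases h : y 0
      · simp [Set.indicator, h, pr]
      · simp only [Set.indicator, Set.mem_setOf_eq, h, if_true, pr]
        ring
    rw [hsplit, integral_add ((integrable_const _).indicator (measurableSet_coord true))
      (integrable_const _), integral_indicator_const _ (measurableSet_coord true),
      integral_const, measureReal_def, measureReal_def]
    have hμt : μ {y : ℤ → Bool | y 0 = true} = ENNReal.ofReal (1 - ε) :=
      point_meas ε μ hμ true
    rw [hμt, measure_univ, ENNReal.toReal_one, ENNReal.toReal_ofReal (by linarith)]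
    simp only [smul_eq_mul, one_mul]
    ring
  · intro a
    have h1 : (fun y => grat ε (_root_.negPart y) a) =ᵐ[μ] fun _ => pr ε a := by
      filter_upwards [ae_not_rat ε μ hμ hε0 hε1] with y hy
      cases a <;> simp [grat, hy, pr]
    exact h1.trans (condexp_eq ε μ hμ hε0 hε1 a)
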